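/- arXiv:2205.13114 — 2 statements merged into one kernel-verified Lean document; each statement's English description precedes it below -/
import Mathlib

section
/- If a ≥ a* ≥ 0 and f : ℝ → ℝ is 1-Lipschitz, nondecreasing, with f(σ*) = a* and f(σ) = a where σ ≥ σ*, then ∫_{σ*}^{σ} (f(σ') − a*) dσ' ≥ (1/2)(a − a*)². -/
theorem integral_lower_bound
    (f : ℝ → ℝ) (hf : LipschitzWith 1 f) (hmono : Monotone f)
    (σstar σ : ℝ) (hσ : σstar ≤ σ)
    (astar a : ℝ) (hastar : astar = f σstar) (ha : a = f σ)
    (h0 : 0 ≤ astar) (haa : astar ≤ a) :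
    (1/2) * (a - astar)^2 ≤ ∫ x in σstar..σ, (f x - astar) := by
  set d := a - astar with hd_def
  have hd : 0 ≤ d := by simp [hd_def]; linarith
  have hlip : ∀ x y : ℝ, f x - f y ≤ |x - y| := by
    intro x y
    have := hf.dist_le_mul x y
    rw [Real.dist_eq, Real.dist_eq] at this
    calc f x - f y ≤ |f x - f y| := le_abs_self _
      _ ≤ |x - y| := by simpa using this
  have hdσ : d ≤ σ - σstar := by
    have := hlip σ σstar
    rw [abs_of_nonneg (by linarith)] at this
    simp [hd_def, hastar, ha]; linarith
  have hcont : Continuous f := hf.continuous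
  have hint : ∀ u v : ℝ, IntervalIntegrable (fun x => f x - astar) MeasureTheory.volume u v :=
    fun u v => ((hcont.sub continuous_const).intervalIntegrable u v)
  have hsplit : (∫ x in σstar..σ, (f x - astar)) =
      (∫ x in σstar..(σ - d), (f x - astar)) + ∫ x in (σ - d)..σ, (f x - astar) :=
    (intervalIntegral.integral_add_adjacent_intervals (hint _ _) (hint _ _)).symm
  have h1 : 0 ≤ ∫ x in σstar..(σ - d), (f x - astar) := by
    apply intervalIntegral.integral_nonneg (by linarith)
    intro x hx
    have : f σstar ≤ f x := hmono hx.1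
    linarith [hastar ▸ this]
  have h2 : (∫ x in (σ - d)..σ, (x - (σ - d))) ≤ ∫ x in (σ - d)..σ, (f x - astar) := by
    apply intervalIntegral.integral_mono_on (by linarith)
      ((continuous_id.sub continuous_const).intervalIntegrable _ _) (hint _ _)
    intro x hx
    simp only [Pi.sub_apply, id_eq]
    have := hlip σ x
    rw [abs_of_nonneg (by linarith [hx.2])] at this
    have : f x ≥ a - (σ - x) := by rw [ha]; linarith
    linarith [hx.1]
  have h3 : (∫ x in (σ - d)..σ, (x - (σ - d))) = (1/2) * d^2 := by
    rw [intervalIntegral.integral_sub (continuous_id'.intervalIntegrable _ _) intervalIntegrable_const]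
    simp [integral_id]
    ring
  rw [hsplit]
  linarith [h2, h3 ▸ h2]
end

section
/- Let Y be an integrable real random variable, c > 0, and σ* ∈ ℝ satisfy E[ReLU(σ* − Y)] = c. Then for every σ ∈ ℝ, E[H_c(σ − Y) − H_c(σ* − Y)] ≥ (1/2)·(c_D(σ) − c_D(σ*))², where c_D(s) = E[ReLU(s − Y)] and H_c(z) = (1/2)·ReLU(z)² − c·z. -/
open MeasureTheory

lemma relu_pointwise (c a b : ℝ) :
    (max b 0 - c) * (a - b) + (1/2) * (max a 0 - max b 0)^2 ≤
      ((1/2) * (max a 0)^2 - c * a) - ((1/2) * (max b 0)^2 - c * b) := by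
  have hA : a ≤ max a 0 := le_max_left _ _
  have hB0 : (0:ℝ) ≤ max b 0 := le_max_right _ _
  have hBb : max b 0 * (max b 0 - b) = 0 := by
    rcases le_total b 0 with h | h
    · rw [max_eq_right h]; ring
    · rw [max_eq_left h]; ring
  nlinarith [hA, hB0, hBb]

theorem linear_quadratic_loss_lemma
    {Ω : Type*} [MeasurableSpace Ω] (μ : Measure Ω) [IsProbabilityMeasure μ]
    (Y : Ω → ℝ) (hY : Integrable Y μ)
    (c : ℝ) (hc : 0 < c) (σstar : ℝ)
    (hres : ∫ ω, max (σstar - Y ω) 0 ∂μ = c)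
    (hInt : ∀ s : ℝ, Integrable (fun ω => (1/2) * (max (s - Y ω) 0)^2 - c * (s - Y ω)) μ)
    (σ : ℝ) :
    (1/2) * ((∫ ω, max (σ - Y ω) 0 ∂μ) - (∫ ω, max (σstar - Y ω) 0 ∂μ))^2 ≤
      ∫ ω, (((1/2) * (max (σ - Y ω) 0)^2 - c * (σ - Y ω)) -
            ((1/2) * (max (σstar - Y ω) 0)^2 - c * (σstar - Y ω))) ∂μ := by
  have hm : ∀ s : ℝ, AEStronglyMeasurable (fun ω => max (s - Y ω) 0) μ := fun s =>
    (Continuous.max (continuous_const.sub continuous_id) continuous_const).comp_aestronglyMeasurable hY.1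
  have hRelu : ∀ s : ℝ, Integrable (fun ω => max (s - Y ω) 0) μ := by
    intro s
    refine (hY.norm.add (integrable_const |s|)).mono' (hm s) ?_
    filter_upwards with ω
    simp only [Pi.add_apply, Real.norm_eq_abs]
    rcases le_total (s - Y ω) 0 with h | h
    · rw [max_eq_right h, abs_of_nonneg le_rfl]
      have := abs_nonneg (Y ω)
      have := abs_nonneg s
      linarith
    · rw [max_eq_left h, abs_of_nonneg h]
      have := neg_abs_le (Y ω)
      have := le_abs_self s
      linarith
  set g : Ω → ℝ := fun ω => max (σ - Y ω) 0 - max (σstar - Y ω) 0 with hgdef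
  have hgInt : Integrable g μ := (hRelu σ).sub (hRelu σstar)
  have hgb : ∀ ω, |g ω| ≤ |σ - σstar| := by
    intro ω
    have h := abs_max_sub_max_le_abs (σ - Y ω) (σstar - Y ω) 0
    simpa [hgdef] using h
  have hg2Int : Integrable (fun ω => (g ω)^2) μ := by
    refine (integrable_const ((σ - σstar)^2)).mono' (hgInt.1.pow 2) ?_
    filter_upwards with ω
    rw [Real.norm_eq_abs, abs_pow]
    calc |g ω| ^ 2 ≤ |σ - σstar| ^ 2 := by
          exact pow_le_pow_left₀ (abs_nonneg _) (hgb ω) 2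
      _ = (σ - σstar)^2 := sq_abs _
  -- the pointwise lower bound
  have hFInt : Integrable (fun ω =>
      ((1/2) * (max (σ - Y ω) 0)^2 - c * (σ - Y ω)) -
      ((1/2) * (max (σstar - Y ω) 0)^2 - c * (σstar - Y ω))) μ := (hInt σ).sub (hInt σstar)
  have h1 : Integrable (fun ω => (max (σstar - Y ω) 0 - c) * (σ - σstar)) μ := by
    exact ((hRelu σstar).sub (integrable_const c)).mul_const (σ - σstar)
  have h2 : Integrable (fun ω => (1/2) * (g ω)^2) μ := hg2Int.const_mul (1/2)
  have hLInt : Integrable (fun ω =>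
      (max (σstar - Y ω) 0 - c) * (σ - σstar) + (1/2) * (g ω)^2) μ := h1.add h2
  have hmono : ∫ ω, ((max (σstar - Y ω) 0 - c) * (σ - σstar) + (1/2) * (g ω)^2) ∂μ ≤
      ∫ ω, (((1/2) * (max (σ - Y ω) 0)^2 - c * (σ - Y ω)) -
            ((1/2) * (max (σstar - Y ω) 0)^2 - c * (σstar - Y ω))) ∂μ := by
    refine integral_mono hLInt hFInt ?_
    intro ω
    have h := relu_pointwise c (σ - Y ω) (σstar - Y ω)
    have hab : (σ - Y ω) - (σstar - Y ω) = σ - σstar := by ring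
    rw [hab] at h
    simpa [hgdef] using h
  -- compute integral of the lower bound
  have hL : ∫ ω, ((max (σstar - Y ω) 0 - c) * (σ - σstar) + (1/2) * (g ω)^2) ∂μ =
      (1/2) * ∫ ω, (g ω)^2 ∂μ := by
    have h3 : Integrable (fun ω => max (σstar - Y ω) 0 - c) μ := by
      exact (hRelu σstar).sub (integrable_const c)
    rw [integral_add h1 h2, integral_mul_const, integral_sub (hRelu σstar) (integrable_const c),
      hres, integral_const, integral_const_mul, probReal_univ]
    simp
  -- variance inequality : (∫ g)^2 ≤ ∫ g^2
  set m : ℝ := ∫ ω, g ω ∂μ with hmdef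
  have hvar : m^2 ≤ ∫ ω, (g ω)^2 ∂μ := by
    have h0 : (0:ℝ) ≤ ∫ ω, (g ω - m)^2 ∂μ := integral_nonneg fun ω => sq_nonneg _
    have he : (fun ω => (g ω - m)^2) = fun ω => ((g ω)^2 - (2*m) * g ω) + m^2 := by
      funext ω; ring
    have h4 : Integrable (fun ω => 2*m * g ω) μ := hgInt.const_mul (2*m)
    have h5 : Integrable (fun ω => (g ω)^2 - 2*m * g ω) μ := by exact hg2Int.sub h4
    rw [he, integral_add h5 (integrable_const _),
      integral_sub hg2Int h4, integral_const_mul, integral_const] at h0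
    simp only [probReal_univ, ENNReal.toReal_one, smul_eq_mul, one_mul] at h0
    nlinarith [h0]
  have hgint : m = (∫ ω, max (σ - Y ω) 0 ∂μ) - (∫ ω, max (σstar - Y ω) 0 ∂μ) := by
    rw [hmdef, hgdef, integral_sub (hRelu σ) (hRelu σstar)]
  calc (1/2) * ((∫ ω, max (σ - Y ω) 0 ∂μ) - (∫ ω, max (σstar - Y ω) 0 ∂μ))^2
      = (1/2) * m^2 := by rw [hgint]
    _ ≤ (1/2) * ∫ ω, (g ω)^2 ∂μ := by linarith [hvar]
    _ = ∫ ω, ((max (σstar - Y ω) 0 - c) * (σ - σstar) + (1/2) * (g ω)^2) ∂μ := hL.symm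
    _ ≤ _ := hmono
end
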